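/- arXiv:0903.2720 — 5 statements merged into one kernel-verified Lean document; each statement's English description precedes it below -/
import Mathlib

section
/- Let -∞ < ω_* < ω^* < +∞. Say that Z₀ : (ω_*,ω^*) → ℂ is asymptotically zero controllable for the linearized Bloch equation if there exists w ∈ L¹((0,+∞),ℂ) such that the solution Z(t,ω) = (Z₀(ω) - ∫₀^t w(τ) e^{-iωτ} dτ) e^{iωt} satisfies Z(t,ω) → 0 as t → +∞ for every ω ∈ (ω_*,ω^*). Then Z₀ is asymptotically zero controllable if and only if Z₀ is the restriction to (ω_*,ω^*) of F[w] for some w ∈ L¹((0,+∞),ℂ). -/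
/-!
Since `|e^{iωt}| = 1`, the solution `Z(t,ω)` tends to `0` exactly when the truncated Fourier
integrals `∫₀ᵗ w(τ) e^{-iωτ} dτ` tend to `Z₀(ω)`. For `w ∈ L¹(0,∞)` they always converge, to
`F(w)(ω)`; so the control realising `Z₀` as a Fourier transform is the one steering it to zero.
-/

open MeasureTheory Complex Set Filter

/-- `Z₀` is asymptotically zero controllable for the linearized Bloch equation
`∂ₜ Z = iωZ - w(t)` on the frequency interval `(ωs, ωe)`: there is an integrable control
`w` on `(0,∞)` such that the explicit solution
`Z(t,ω) = (Z₀(ω) - ∫₀ᵗ w(τ)e^{-iωτ}dτ) e^{iωt}` tends to `0` as `t → ∞`, for every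
`ω ∈ (ωs, ωe)`. -/
def AsympZeroControllable (ωs ωe : ℝ) (Z₀ : ℝ → ℂ) : Prop :=
  ∃ w : ℝ → ℂ, IntegrableOn w (Ioi 0) ∧
    ∀ ω ∈ Ioo ωs ωe,
      Tendsto (fun t : ℝ =>
          (Z₀ ω - ∫ τ in Ioo 0 t, w τ * Complex.exp (-Complex.I * ω * τ)) *
            Complex.exp (Complex.I * ω * t))
        atTop (nhds 0)

open Topology

theorem tendsto_setIntegral_Ioo_atTop {E : Type*} [NormedAddCommGroup E] [NormedSpace ℝ E]
    {μ : Measure ℝ} {f : ℝ → E} {a : ℝ} (hf : IntegrableOn f (Ioi a) μ) :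
    Tendsto (fun t => ∫ τ in Ioo a t, f τ ∂μ) atTop (𝓝 (∫ τ in Ioi a, f τ ∂μ)) := by
  have hunion : ⋃ t, Ioo a t = Ioi a := iUnion_Ioo_right a
  have h := tendsto_setIntegral_of_monotone (μ := μ) (f := f) (fun _ => measurableSet_Ioo)
    (fun _ _ hst => Ioo_subset_Ioo_right hst) (hunion ▸ hf)
  rwa [hunion] at h

theorem integrableOn_mul_exp_neg_I_mul {w : ℝ → ℂ} {s : Set ℝ} (hw : IntegrableOn w s) (ω : ℝ) :
    IntegrableOn (fun τ => w τ * exp (-I * ω * τ)) s := by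
  have hexp : Continuous fun τ : ℝ => exp (-I * ω * τ) := by fun_prop
  exact Integrable.mul_bdd hw hexp.aestronglyMeasurable (c := 1)
    (Eventually.of_forall fun τ => by simp [norm_exp])

theorem tendsto_mul_exp_I_mul_nhds_zero_iff {l : Filter ℝ} {u : ℝ → ℂ} (ω : ℝ) :
    Tendsto (fun t => u t * exp (I * ω * t)) l (𝓝 0) ↔ Tendsto u l (𝓝 0) := by
  have hunit (t : ℝ) : ‖exp (I * ω * t)‖ = 1 := by simp [norm_exp]
  rw [tendsto_zero_iff_norm_tendsto_zero, tendsto_zero_iff_norm_tendsto_zero (f := u)]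
  simp only [norm_mul, hunit, mul_one]

theorem tendsto_const_sub_nhds_zero_iff {G α : Type*} [AddGroup G] [TopologicalSpace G]
    [IsTopologicalAddGroup G] [T2Space G] {l : Filter α} [l.NeBot] {F : α → G} {c L : G}
    (hF : Tendsto F l (𝓝 L)) :
    Tendsto (fun x => c - F x) l (𝓝 0) ↔ c = L := by
  have hsub : Tendsto (fun x => c - F x) l (𝓝 (c - L)) := tendsto_const_nhds.sub hF
  constructor
  · exact fun h => sub_eq_zero.mp (tendsto_nhds_unique hsub h)
  · rintro rfl
    simpa using hsub

theorem asymp_zero_controllable_iff_fourier_general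
    (ωs ωe : ℝ) (Z₀ : ℝ → ℂ) :
    AsympZeroControllable ωs ωe Z₀ ↔
      ∃ w : ℝ → ℂ, IntegrableOn w (Ioi 0) ∧
        ∀ ω ∈ Ioo ωs ωe,
          Z₀ ω = ∫ t in Ioi 0, w t * Complex.exp (-Complex.I * ω * t) := by
  refine exists_congr fun w => and_congr_right fun hw => forall₂_congr fun ω _ => ?_
  rw [tendsto_mul_exp_I_mul_nhds_zero_iff]
  exact tendsto_const_sub_nhds_zero_iff
    (tendsto_setIntegral_Ioo_atTop (integrableOn_mul_exp_neg_I_mul hw ω))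

/-- `Z₀` is asymptotically zero controllable for the linearized Bloch equation
iff it is, on `(ωs, ωe)`, the Fourier transform of an integrable function supported
in `(0, +∞)`. -/
theorem asymp_zero_controllable_iff_fourier
    (ωs ωe : ℝ) (hω : ωs < ωe) (Z₀ : ℝ → ℂ) :
    AsympZeroControllable ωs ωe Z₀ ↔
      ∃ w : ℝ → ℂ, IntegrableOn w (Ioi 0) ∧
        ∀ ω ∈ Ioo ωs ωe,
          Z₀ ω = ∫ t in Ioi 0, w t * Complex.exp (-Complex.I * ω * t) :=
  asymp_zero_controllable_iff_fourier_general ωs ωe Z₀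
end

section
/- Let -∞ < ω_* < ω^* < +∞, b ∈ [0,+∞) and β, γ ∈ ℝ. For ε > 0, consider the bounded linear operator A_ε on H¹((ω_*,ω^*),ℝ³) given by (A_ε M₀)(ω) := exp(ε ω Ω_z + β Ω_x + γ Ω_y) exp(b ω Ω_z) M₀(ω) (the value at time b+ε of the solution of the Bloch equation with controls u = (β/ε)1_{[b,b+ε]}, v = (γ/ε)1_{[b,b+ε]} and initial data M₀), and the operator A₀ given by (A₀ M₀)(ω) := exp(β Ω_x + γ Ω_y) exp(b ω Ω_z) M₀(ω) (the value just after time b of the solution with Dirac controls u = β δ_b, v = γ δ_b). Then ‖A_ε - A₀‖ → 0 as ε → 0 in the operator norm of bounded linear maps from H¹((ω_*,ω^*),ℝ³) to itself. -/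
open MeasureTheory Complex Set Matrix

noncomputable def OmegaX : Matrix (Fin 3) (Fin 3) ℝ := !![0,0,0;0,0,-1;0,1,0]
noncomputable def OmegaY : Matrix (Fin 3) (Fin 3) ℝ := !![0,0,1;0,0,0;-1,0,0]
noncomputable def OmegaZ : Matrix (Fin 3) (Fin 3) ℝ := !![0,-1,0;1,0,0;0,0,0]

/-- `M ∈ H¹((ωs,ωe),ℝ³)` with (weak) derivative `M'`: both are square integrable on the
interval and `M` is the primitive of `M'` there. -/
def H1On (ωs ωe : ℝ) (M M' : ℝ → Fin 3 → ℝ) : Prop :=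
  MemLp M 2 (volume.restrict (Ioo ωs ωe)) ∧
  MemLp M' 2 (volume.restrict (Ioo ωs ωe)) ∧
  ∀ ω₁ ∈ Ioo ωs ωe, ∀ ω₂ ∈ Ioo ωs ωe, M ω₂ - M ω₁ = ∫ s in ω₁..ω₂, M' s

/-- The `H¹((ωs,ωe),ℝ³)` norm of a function `M` with derivative `M'`. -/
noncomputable def H1Norm (ωs ωe : ℝ) (M M' : ℝ → Fin 3 → ℝ) : ℝ :=
  Real.sqrt ((eLpNorm M 2 (volume.restrict (Ioo ωs ωe))).toReal ^ 2 +
    (eLpNorm M' 2 (volume.restrict (Ioo ωs ωe))).toReal ^ 2)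

/-! The operator `A_ε - A₀` is multiplication by the matrix
`P(ε, ω) = (exp(εωΩ_z + βΩ_x + γΩ_y) - exp(βΩ_x + γΩ_y)) exp(bωΩ_z)`, which is smooth in `(ε, ω)`
and vanishes at `ε = 0`. Multiplication by a `C¹` matrix function `Ψ` maps `H¹` to itself, with
derivative `Ψ' M + Ψ M'` (integration by parts for absolutely continuous functions, entry by
entry) and norm at most `sup ‖Ψ‖ + sup ‖Ψ'‖`. By compactness of `[ω_*, ω^*]`, both `P(ε, ·)` and
`∂_ω P(ε, ·)` tend to `0` uniformly as `ε → 0`. -/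

open Filter Topology
open scoped ENNReal

instance Matrix.pseudoMetrizableSpace {m n R : Type*} [Finite m] [Finite n] [TopologicalSpace R]
    [TopologicalSpace.PseudoMetrizableSpace R] :
    TopologicalSpace.PseudoMetrizableSpace (Matrix m n R) :=
  inferInstanceAs (TopologicalSpace.PseudoMetrizableSpace (m → n → R))

section
variable {ι : Type*} [Fintype ι] {f : ℝ → ι → ℝ} {a b : ℝ}

theorem intervalIntegrable_pi_iff :
    IntervalIntegrable f volume a b ↔ ∀ i, IntervalIntegrable (f · i) volume a b := by
  simp only [intervalIntegrable_iff, IntegrableOn, integrable_pi_iff]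

theorem intervalIntegral_apply (hf : IntervalIntegrable f volume a b) (i : ι) :
    (∫ s in a..b, f s) i = ∫ s in a..b, f s i :=
  ((ContinuousLinearMap.proj (R := ℝ) i).intervalIntegral_comp_comm hf).symm

end

section
variable {φ m m' : ℝ → ℝ} {a b : ℝ}

theorem continuousOn_of_sub_eq_intervalIntegral
    (hm' : IntervalIntegrable m' volume a b)
    (hm : ∀ t ∈ uIcc a b, m t - m a = ∫ s in a..t, m' s) :
    ContinuousOn m (uIcc a b) := by
  refine ((continuousOn_const (c := m a)).add
    (intervalIntegral.continuousOn_primitive_interval' hm' left_mem_uIcc)).congr fun t ht => ?_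
  simp [← hm t ht]

theorem intervalIntegrable_deriv_mul_add_mul_of_sub_eq_intervalIntegral
    (hφ : ContDiff ℝ 1 φ) (hm' : IntervalIntegrable m' volume a b)
    (hm : ∀ t ∈ uIcc a b, m t - m a = ∫ s in a..t, m' s) :
    IntervalIntegrable (fun s => deriv φ s * m s + φ s * m' s) volume a b :=
  (((hφ.continuous_deriv le_rfl).continuousOn.mul
    (continuousOn_of_sub_eq_intervalIntegral hm' hm)).intervalIntegrable).add
    (hm'.continuousOn_mul hφ.continuous.continuousOn)

theorem integral_deriv_mul_add_mul_of_sub_eq_intervalIntegral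
    (hφ : ContDiff ℝ 1 φ) (hm' : IntervalIntegrable m' volume a b)
    (hm : ∀ t ∈ uIcc a b, m t - m a = ∫ s in a..t, m' s) :
    ∫ s in a..b, deriv φ s * m s + φ s * m' s = φ b * m b - φ a * m a := by
  set g : ℝ → ℝ := fun t => m a + ∫ s in a..t, m' s
  have hgm : ∀ t ∈ uIcc a b, g t = m t := fun t ht => by simp [g, ← hm t ht]
  have hφ_ac : AbsolutelyContinuousOnInterval φ a b :=
    (hφ.contDiffOn).absolutelyContinuousOnInterval
  have hg_ac : AbsolutelyContinuousOnInterval g a b :=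
    (contDiffOn_const.absolutelyContinuousOnInterval).add
      (hm'.absolutelyContinuousOnInterval_intervalIntegral left_mem_uIcc)
  rw [← hgm a left_mem_uIcc, ← hgm b right_mem_uIcc,
    ← hφ_ac.integral_deriv_mul_eq_sub hg_ac]
  refine intervalIntegral.integral_congr_ae ?_
  filter_upwards [hm'.ae_hasDerivAt_integral] with s hs hsI
  have hsI' : s ∈ uIcc a b := uIoc_subset_uIcc hsI
  rw [hgm s hsI', ((hs hsI' a left_mem_uIcc).const_add (m a)).deriv]

end

theorem toReal_eLpNorm_add_le {α E : Type*} [MeasurableSpace α] {μ : Measure α} {p : ℝ≥0∞}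
    [NormedAddCommGroup E] {f g : α → E} (hf : MemLp f p μ) (hg : MemLp g p μ) (hp : 1 ≤ p) :
    (eLpNorm (f + g) p μ).toReal ≤ (eLpNorm f p μ).toReal + (eLpNorm g p μ).toReal := by
  simpa only [toReal_eLpNorm (hf.add hg).1, toReal_eLpNorm hf.1, toReal_eLpNorm hg.1]
    using lpNorm_add_le hf hp

theorem MeasureTheory.AEStronglyMeasurable.mulVec {α m n : Type*} [MeasurableSpace α]
    {μ : Measure α} [Fintype n] {Ψ : α → Matrix m n ℝ} {M : α → n → ℝ}
    (hΨ : AEStronglyMeasurable Ψ μ) (hM : AEStronglyMeasurable M μ) :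
    AEStronglyMeasurable (fun x => Ψ x *ᵥ M x) μ :=
  (continuous_fst.matrix_mulVec continuous_snd).comp_aestronglyMeasurable (hΨ.prodMk hM)

theorem NormedSpace.contDiff_exp {𝔸 : Type*} [NormedRing 𝔸] [NormedAlgebra ℝ 𝔸] [CompleteSpace 𝔸]
    {n : WithTop ℕ∞} : ContDiff ℝ n (NormedSpace.exp : 𝔸 → 𝔸) :=
  AnalyticOnNhd.contDiff fun x _ => NormedSpace.exp_analytic x

theorem IsCompact.eventually_forall_norm_lt {X Y E : Type*} [TopologicalSpace X]
    [TopologicalSpace Y] [SeminormedAddCommGroup E] {K : Set Y} (hK : IsCompact K)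
    {G : X × Y → E} (hG : Continuous G) {x₀ : X} (hG₀ : ∀ y ∈ K, G (x₀, y) = 0) {η : ℝ}
    (hη : 0 < η) : ∀ᶠ x in 𝓝 x₀, ∀ y ∈ K, ‖G (x, y)‖ < η :=
  hK.eventually_forall_of_forall_eventually fun y hy =>
    (hG.tendsto (x₀, y)).norm.eventually_lt_const (by simpa [hG₀ y hy] using hη)

theorem ContDiff.deriv_comp_prodMk {E : Type*} [NormedAddCommGroup E] [NormedSpace ℝ E]
    {F : ℝ × ℝ → E} (hF : ContDiff ℝ 1 F) (x y : ℝ) :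
    deriv (fun y => F (x, y)) y = fderiv ℝ F (x, y) (0, 1) :=
  ((hF.differentiable one_ne_zero (x, y)).hasFDerivAt.comp_hasDerivAt y
    ((hasDerivAt_const y x).prodMk (hasDerivAt_id y))).deriv

theorem ContDiff.eventually_forall_norm_lt_and_norm_deriv_lt {E : Type*} [NormedAddCommGroup E]
    [NormedSpace ℝ E] {F : ℝ × ℝ → E} (hF : ContDiff ℝ 1 F) (hF₀ : ∀ y, F (0, y) = 0)
    {K : Set ℝ} (hK : IsCompact K) {η : ℝ} (hη : 0 < η) :
    ∀ᶠ x in 𝓝 0, ∀ y ∈ K, ‖F (x, y)‖ < η ∧ ‖deriv (fun y => F (x, y)) y‖ < η := by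
  have hdF : Continuous fun p : ℝ × ℝ => fderiv ℝ F p (0, 1) :=
    (hF.continuous_fderiv one_ne_zero).clm_apply continuous_const
  have hdF₀ : ∀ y, fderiv ℝ F (0, y) (0, 1) = 0 := fun y => by
    rw [← hF.deriv_comp_prodMk, funext hF₀, deriv_const]
  filter_upwards [hK.eventually_forall_norm_lt hF.continuous (fun y _ => hF₀ y) hη,
    hK.eventually_forall_norm_lt hdF (fun y _ => hdF₀ y) hη] with x hFx hdFx y hy
  exact ⟨hFx y hy, hF.deriv_comp_prodMk x y ▸ hdFx y hy⟩

noncomputable def pulseDifferenceMatrix (b β γ : ℝ) (p : ℝ × ℝ) : Matrix (Fin 3) (Fin 3) ℝ :=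
  (NormedSpace.exp ((p.1 * p.2) • OmegaZ + β • OmegaX + γ • OmegaY) -
    NormedSpace.exp (β • OmegaX + γ • OmegaY)) * NormedSpace.exp ((b * p.2) • OmegaZ)

theorem pulseDifferenceMatrix_mulVec (b β γ ε ω : ℝ) (v : Fin 3 → ℝ) :
    pulseDifferenceMatrix b β γ (ε, ω) *ᵥ v =
      NormedSpace.exp ((ε * ω) • OmegaZ + β • OmegaX + γ • OmegaY) *ᵥ
          (NormedSpace.exp ((b * ω) • OmegaZ) *ᵥ v) -
        NormedSpace.exp (β • OmegaX + γ • OmegaY) *ᵥ (NormedSpace.exp ((b * ω) • OmegaZ) *ᵥ v) := by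
  rw [pulseDifferenceMatrix, Matrix.sub_mul, Matrix.sub_mulVec, Matrix.mulVec_mulVec,
    Matrix.mulVec_mulVec]

theorem pulseDifferenceMatrix_zero_left (b β γ ω : ℝ) : pulseDifferenceMatrix b β γ (0, ω) = 0 := by
  simp [pulseDifferenceMatrix]

section
attribute [local instance] Matrix.linftyOpNormedAddCommGroup Matrix.linftyOpNormedSpace
  Matrix.linftyOpNormedRing Matrix.linftyOpNormedAlgebra

section
variable {m n : Type*} [Fintype m] [Fintype n] {Φ : ℝ → Matrix m n ℝ}

theorem Matrix.hasDerivAt_entry {Φ' : Matrix m n ℝ} {x : ℝ} (h : HasDerivAt Φ Φ' x)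
    (i : m) (j : n) :
    HasDerivAt (fun t => Φ t i j) (Φ' i j) x :=
  (LinearMap.toContinuousLinearMap (Matrix.entryLinearMap ℝ ℝ i j)).hasFDerivAt.comp_hasDerivAt x h

theorem Matrix.contDiff_entry (hΦ : ContDiff ℝ 1 Φ) (i : m) (j : n) :
    ContDiff ℝ 1 (fun t => Φ t i j) :=
  (LinearMap.toContinuousLinearMap (Matrix.entryLinearMap ℝ ℝ i j)).contDiff.comp hΦ


variable {M M' : ℝ → n → ℝ} {a b : ℝ}

theorem integral_deriv_mulVec_add_mulVec_of_sub_eq_intervalIntegral (hΦ : ContDiff ℝ 1 Φ)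
    (hM' : IntervalIntegrable M' volume a b)
    (hM : ∀ t ∈ uIcc a b, M t - M a = ∫ s in a..t, M' s) :
    ∫ s in a..b, (deriv Φ s *ᵥ M s + Φ s *ᵥ M' s) = Φ b *ᵥ M b - Φ a *ᵥ M a := by
  have hentry : ∀ i j, deriv (fun t => Φ t i j) = fun s => deriv Φ s i j := fun i j =>
    funext fun s => (Matrix.hasDerivAt_entry (hΦ.differentiable one_ne_zero s).hasDerivAt i j).deriv
  have hM'j : ∀ j, IntervalIntegrable (M' · j) volume a b := intervalIntegrable_pi_iff.1 hM'
  have hMj : ∀ j, ∀ t ∈ uIcc a b, M t j - M a j = ∫ s in a..t, M' s j := fun j t ht => by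
    rw [← intervalIntegral_apply (hM'.mono_set (uIcc_subset_uIcc_left ht)), ← hM t ht,
      Pi.sub_apply]
  have hint : ∀ i j, IntervalIntegrable
      (fun s => deriv Φ s i j * M s j + Φ s i j * M' s j) volume a b := fun i j => by
    simpa only [hentry] using intervalIntegrable_deriv_mul_add_mul_of_sub_eq_intervalIntegral
      (Matrix.contDiff_entry hΦ i j) (hM'j j) (hMj j)
  have hcomp : ∀ i, (fun s => (deriv Φ s *ᵥ M s + Φ s *ᵥ M' s) i) =
      fun s => ∑ j, (deriv Φ s i j * M s j + Φ s i j * M' s j) := fun i => by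
    ext s
    simp only [Pi.add_apply, Matrix.mulVec, dotProduct, Finset.sum_add_distrib]
  have hvec : IntervalIntegrable (fun s => deriv Φ s *ᵥ M s + Φ s *ᵥ M' s) volume a b :=
    intervalIntegrable_pi_iff.2 fun i => by
      rw [hcomp i]
      simpa only [Finset.sum_fn] using IntervalIntegrable.sum Finset.univ fun j _ => hint i j
  ext i
  rw [intervalIntegral_apply hvec, hcomp i, intervalIntegral.integral_finsetSum fun j _ => hint i j]
  simp only [Pi.sub_apply, Matrix.mulVec, dotProduct, ← Finset.sum_sub_distrib]
  refine Finset.sum_congr rfl fun j _ => ?_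
  simpa only [hentry] using integral_deriv_mul_add_mul_of_sub_eq_intervalIntegral
    (Matrix.contDiff_entry hΦ i j) (hM'j j) (hMj j)

end

section
variable {α : Type*} [MeasurableSpace α] {μ : Measure α} {p : ℝ≥0∞}
  {m n : Type*} [Fintype m] [Fintype n] {Ψ : α → Matrix m n ℝ} {M : α → n → ℝ} {c : ℝ}

theorem eLpNorm_mulVec_le (hc : ∀ᵐ x ∂μ, ‖Ψ x‖ ≤ c) :
    eLpNorm (fun x => Ψ x *ᵥ M x) p μ ≤ ENNReal.ofReal c * eLpNorm M p μ :=
  eLpNorm_le_mul_eLpNorm_of_ae_le_mul (hc.mono fun _ hx =>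
    (Matrix.linfty_opNorm_mulVec _ _).trans (mul_le_mul_of_nonneg_right hx (norm_nonneg _))) p

theorem MeasureTheory.MemLp.mulVec (hM : MemLp M p μ) (hΨ : AEStronglyMeasurable Ψ μ)
    (hc : ∀ᵐ x ∂μ, ‖Ψ x‖ ≤ c) : MemLp (fun x => Ψ x *ᵥ M x) p μ :=
  ⟨hΨ.mulVec hM.1, (eLpNorm_mulVec_le hc).trans_lt (ENNReal.mul_lt_top ENNReal.ofReal_lt_top hM.2)⟩

theorem toReal_eLpNorm_mulVec_le (hM : MemLp M p μ) (hc₀ : 0 ≤ c) (hc : ∀ᵐ x ∂μ, ‖Ψ x‖ ≤ c) :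
    (eLpNorm (fun x => Ψ x *ᵥ M x) p μ).toReal ≤ c * (eLpNorm M p μ).toReal := by
  simpa only [ENNReal.toReal_mul, ENNReal.toReal_ofReal hc₀] using
    ENNReal.toReal_mono (ENNReal.mul_ne_top ENNReal.ofReal_ne_top hM.eLpNorm_ne_top)
      (eLpNorm_mulVec_le (M := M) (p := p) hc)

end

section
variable {ωs ωe : ℝ} {M M' : ℝ → Fin 3 → ℝ} {Ψ : ℝ → Matrix (Fin 3) (Fin 3) ℝ}

theorem H1On.mulVec (hM : H1On ωs ωe M M') (hΨ : ContDiff ℝ 1 Ψ) :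
    H1On ωs ωe (fun ω => Ψ ω *ᵥ M ω) (fun ω => deriv Ψ ω *ᵥ M ω + Ψ ω *ᵥ M' ω) := by
  obtain ⟨hM, hM', hftc⟩ := hM
  have hΨ' : Continuous (deriv Ψ) := hΨ.continuous_deriv le_rfl
  have hbound : ∀ {Φ : ℝ → Matrix (Fin 3) (Fin 3) ℝ}, Continuous Φ →
      ∃ C, ∀ᵐ ω ∂volume.restrict (Ioo ωs ωe), ‖Φ ω‖ ≤ C := fun hΦ => by
    obtain ⟨C, hC⟩ := isCompact_Icc.exists_bound_of_continuousOn (hΦ.continuousOn (s := Icc ωs ωe))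
    exact ⟨C, ae_restrict_of_forall_mem measurableSet_Ioo fun ω hω => hC ω (Ioo_subset_Icc_self hω)⟩
  obtain ⟨C, hC⟩ := hbound hΨ.continuous
  obtain ⟨C', hC'⟩ := hbound hΨ'
  refine ⟨hM.mulVec hΨ.continuous.aestronglyMeasurable hC,
    (hM.mulVec hΨ'.aestronglyMeasurable hC').add (hM'.mulVec hΨ.continuous.aestronglyMeasurable hC),
    fun ω₁ h₁ ω₂ h₂ => ?_⟩
  have hsub : uIcc ω₁ ω₂ ⊆ Ioo ωs ωe := ordConnected_Ioo.uIcc_subset h₁ h₂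
  have hM'int : IntervalIntegrable M' volume ω₁ ω₂ :=
    (IntegrableOn.mono_set (hM'.integrable one_le_two) hsub).intervalIntegrable
  exact (integral_deriv_mulVec_add_mulVec_of_sub_eq_intervalIntegral hΨ hM'int
    fun t ht => hftc ω₁ h₁ t (hsub ht)).symm

theorem H1Norm_mulVec_le (hM : H1On ωs ωe M M') (hΨ : ContDiff ℝ 1 Ψ) {c₁ c₂ : ℝ}
    (hc₁ : 0 ≤ c₁) (hc₂ : 0 ≤ c₂) (hΨc₁ : ∀ ω ∈ Ioo ωs ωe, ‖Ψ ω‖ ≤ c₁)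
    (hΨc₂ : ∀ ω ∈ Ioo ωs ωe, ‖deriv Ψ ω‖ ≤ c₂) :
    H1Norm ωs ωe (fun ω => Ψ ω *ᵥ M ω) (fun ω => deriv Ψ ω *ᵥ M ω + Ψ ω *ᵥ M' ω) ≤
      (c₁ + c₂) * H1Norm ωs ωe M M' := by
  obtain ⟨hM, hM', -⟩ := hM
  set μ := volume.restrict (Ioo ωs ωe)
  have hae : ∀ {Φ : ℝ → Matrix (Fin 3) (Fin 3) ℝ} {c : ℝ}, (∀ ω ∈ Ioo ωs ωe, ‖Φ ω‖ ≤ c) →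
      ∀ᵐ ω ∂μ, ‖Φ ω‖ ≤ c := ae_restrict_of_forall_mem measurableSet_Ioo
  have hΨ' : Continuous (deriv Ψ) := hΨ.continuous_deriv le_rfl
  set x := (eLpNorm M 2 μ).toReal
  set y := (eLpNorm M' 2 μ).toReal
  set u := (eLpNorm (fun ω => Ψ ω *ᵥ M ω) 2 μ).toReal
  set v := (eLpNorm (fun ω => deriv Ψ ω *ᵥ M ω + Ψ ω *ᵥ M' ω) 2 μ).toReal
  have hu : u ≤ c₁ * x := toReal_eLpNorm_mulVec_le hM hc₁ (hae hΨc₁)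
  have hv : v ≤ c₂ * x + c₁ * y :=
    (toReal_eLpNorm_add_le (hM.mulVec hΨ'.aestronglyMeasurable (hae hΨc₂))
      (hM'.mulVec hΨ.continuous.aestronglyMeasurable (hae hΨc₁)) one_le_two).trans
      (add_le_add (toReal_eLpNorm_mulVec_le hM hc₂ (hae hΨc₂))
        (toReal_eLpNorm_mulVec_le hM' hc₁ (hae hΨc₁)))
  have hx : 0 ≤ x := ENNReal.toReal_nonneg
  have hy : 0 ≤ y := ENNReal.toReal_nonneg
  have hu₀ : 0 ≤ u := ENNReal.toReal_nonneg
  have hv₀ : 0 ≤ v := ENNReal.toReal_nonneg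
  rw [H1Norm, H1Norm, ← Real.sqrt_sq (add_nonneg hc₁ hc₂), ← Real.sqrt_mul (sq_nonneg _)]
  refine Real.sqrt_le_sqrt ?_
  -- `(c₁ + c₂)² (x² + y²) - (c₁ x)² - (c₂ x + c₁ y)² = 2 c₁ c₂ (x² - x y + y²) + c₂² y² ≥ 0`
  nlinarith [mul_le_mul hu hu hu₀ (by positivity), mul_le_mul hv hv hv₀ (by positivity),
    mul_nonneg (mul_nonneg hc₁ hc₂) (add_nonneg (sq_nonneg (x - y)) (mul_nonneg hx hy)),
    mul_nonneg (mul_nonneg hc₂ hc₂) (mul_nonneg hy hy)]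

theorem eventually_exists_H1On_mulVec_and_H1Norm_le {F : ℝ × ℝ → Matrix (Fin 3) (Fin 3) ℝ}
    (hF : ContDiff ℝ 1 F) (hF₀ : ∀ ω, F (0, ω) = 0) (ωs ωe : ℝ) {η : ℝ} (hη : 0 < η) :
    ∀ᶠ ε in 𝓝 0, ∀ M M' : ℝ → Fin 3 → ℝ, H1On ωs ωe M M' → ∃ g : ℝ → Fin 3 → ℝ,
      H1On ωs ωe (fun ω => F (ε, ω) *ᵥ M ω) g ∧
        H1Norm ωs ωe (fun ω => F (ε, ω) *ᵥ M ω) g ≤ η * H1Norm ωs ωe M M' := by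
  filter_upwards [hF.eventually_forall_norm_lt_and_norm_deriv_lt hF₀ isCompact_Icc (half_pos hη)]
    with ε hε M M' hM
  have hΨ : ContDiff ℝ 1 fun ω => F (ε, ω) := hF.comp (contDiff_const.prodMk contDiff_id)
  refine ⟨_, hM.mulVec hΨ, (H1Norm_mulVec_le hM hΨ (half_pos hη).le (half_pos hη).le
    (fun ω hω => (hε ω (Ioo_subset_Icc_self hω)).1.le)
    (fun ω hω => (hε ω (Ioo_subset_Icc_self hω)).2.le)).trans_eq (by ring)⟩

end

theorem contDiff_pulseDifferenceMatrix (b β γ : ℝ) : ContDiff ℝ 1 (pulseDifferenceMatrix b β γ) :=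
  ((NormedSpace.contDiff_exp.comp (((contDiff_fst.mul contDiff_snd).smul contDiff_const).add
    contDiff_const |>.add contDiff_const)).sub contDiff_const).mul
    (NormedSpace.contDiff_exp.comp ((contDiff_const.mul contDiff_snd).smul contDiff_const))

end

theorem dirac_control_operator_norm_limit_general
    (ωs ωe : ℝ) (b : ℝ) (β γ : ℝ) :
    ∀ η > (0:ℝ), ∃ ε₀ > (0:ℝ), ∀ ε : ℝ, 0 < ε → ε < ε₀ →
      ∀ M₀ M₀' : ℝ → Fin 3 → ℝ, H1On ωs ωe M₀ M₀' →
        ∃ g : ℝ → Fin 3 → ℝ,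
          H1On ωs ωe
            (fun ω =>
              NormedSpace.exp ((ε * ω) • OmegaZ + β • OmegaX + γ • OmegaY) *ᵥ
                (NormedSpace.exp ((b * ω) • OmegaZ) *ᵥ M₀ ω) -
              NormedSpace.exp (β • OmegaX + γ • OmegaY) *ᵥ
                (NormedSpace.exp ((b * ω) • OmegaZ) *ᵥ M₀ ω)) g ∧
          H1Norm ωs ωe
            (fun ω =>
              NormedSpace.exp ((ε * ω) • OmegaZ + β • OmegaX + γ • OmegaY) *ᵥ
                (NormedSpace.exp ((b * ω) • OmegaZ) *ᵥ M₀ ω) -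
              NormedSpace.exp (β • OmegaX + γ • OmegaY) *ᵥ
                (NormedSpace.exp ((b * ω) • OmegaZ) *ᵥ M₀ ω)) g ≤
            η * H1Norm ωs ωe M₀ M₀' := by
  intro η hη
  obtain ⟨ε₀, hε₀, hsmall⟩ := Metric.eventually_nhds_iff.1
    (eventually_exists_H1On_mulVec_and_H1Norm_le (contDiff_pulseDifferenceMatrix b β γ)
      (pulseDifferenceMatrix_zero_left b β γ) ωs ωe hη)
  refine ⟨ε₀, hε₀, fun ε hε hεε₀ M₀ M₀' hM => ?_⟩
  simp only [← pulseDifferenceMatrix_mulVec]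
  exact hsmall (by rwa [Real.dist_0_eq_abs, abs_of_pos hε]) M₀ M₀' hM

/-- the value at time `b+ε` of the Bloch flow with controls
`u = (β/ε)1_{[b,b+ε]}`, `v = (γ/ε)1_{[b,b+ε]}` converges, as `ε → 0`, to the Dirac-controlled
flow `exp(βΩ_x+γΩ_y)exp(bωΩ_z)` in the operator norm of bounded operators on
`H¹((ω_*,ω^*),ℝ³)`: for every `η > 0` there is `ε₀ > 0` such that for all `ε ∈ (0,ε₀)` and
all `M₀ ∈ H¹`, the difference `(A_ε - A₀)M₀` lies in `H¹` with
`‖(A_ε - A₀)M₀‖_{H¹} ≤ η ‖M₀‖_{H¹}`. -/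
theorem dirac_control_operator_norm_limit
    (ωs ωe : ℝ) (hω : ωs < ωe) (b : ℝ) (hb : 0 ≤ b) (β γ : ℝ) :
    ∀ η > (0:ℝ), ∃ ε₀ > (0:ℝ), ∀ ε : ℝ, 0 < ε → ε < ε₀ →
      ∀ M₀ M₀' : ℝ → Fin 3 → ℝ, H1On ωs ωe M₀ M₀' →
        ∃ g : ℝ → Fin 3 → ℝ,
          H1On ωs ωe
            (fun ω =>
              NormedSpace.exp ((ε * ω) • OmegaZ + β • OmegaX + γ • OmegaY) *ᵥ
                (NormedSpace.exp ((b * ω) • OmegaZ) *ᵥ M₀ ω) -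
              NormedSpace.exp (β • OmegaX + γ • OmegaY) *ᵥ
                (NormedSpace.exp ((b * ω) • OmegaZ) *ᵥ M₀ ω)) g ∧
          H1Norm ωs ωe
            (fun ω =>
              NormedSpace.exp ((ε * ω) • OmegaZ + β • OmegaX + γ • OmegaY) *ᵥ
                (NormedSpace.exp ((b * ω) • OmegaZ) *ᵥ M₀ ω) -
              NormedSpace.exp (β • OmegaX + γ • OmegaY) *ᵥ
                (NormedSpace.exp ((b * ω) • OmegaZ) *ᵥ M₀ ω)) g ≤
            η * H1Norm ωs ωe M₀ M₀' :=
  dirac_control_operator_norm_limit_general ωs ωe b β γ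
end

section
/- Let M ∈ S² with M ≠ e₃. Then there exist ξ ∈ {x,y} and θ ∈ [0,2π) such that: (a) for every ω ∈ ℝ, exp((π+θ) Ω_ξ) exp(ω Ω_z) exp(π Ω_ξ) exp(ω Ω_z) = exp(θ Ω_ξ) (so that the corresponding Dirac-controlled evolution of duration 2 sends every point of the ensemble, independently of ω, to exp(θ Ω_ξ) M), and (b) | exp(θ Ω_ξ) M - e₃ | < | M - e₃ | in the Euclidean norm of ℝ³. -/
open Matrix Real Set

noncomputable def eucNorm (v : Fin 3 → ℝ) : ℝ := Real.sqrt (v ⬝ᵥ v)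

/-!
If `Ω³ = -Ω`, Rodrigues' formula `exp(θΩ) = 1 + sin θ Ω + (1 - cos θ) Ω²` holds in any real
Banach algebra. Then `P = exp(πΩ) = 1 + 2Ω²` is an involution, and if moreover
`Ω²Ω_z + Ω_zΩ² = -Ω_z` it anticommutes with `Ω_z`; hence `P exp(ωΩ_z) P = exp(-ωΩ_z)` and the
two `Ω_z`-pulses cancel whatever `ω` is. As `exp(θΩ)` is a rotation, it moves `M` closer to `e₃`
exactly when it raises the third coordinate, which becomes `M₂ cos θ + a sin θ` with `a = M₁`
for `Ω_x` and `a = -M₀` for `Ω_y`. Taking for `θ` the argument of `M₂ + i a` raises it unless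
`a = 0 ≤ M₂`, and this cannot happen for both choices when `M ≠ e₃`.
-/

theorem mul_exp_mul_mul_exp_eq_one {𝔸 : Type*} [NormedRing 𝔸] [NormedAlgebra ℚ 𝔸]
    [CompleteSpace 𝔸] {P Z : 𝔸} (hP : P * P = 1) (hPZ : P * Z = -Z * P) :
    P * NormedSpace.exp Z * P * NormedSpace.exp Z = 1 := by
  have hconj : P * NormedSpace.exp Z = NormedSpace.exp (-Z) * P := SemiconjBy.exp_right hPZ
  rw [hconj, mul_assoc (NormedSpace.exp (-Z)) P P, hP, mul_one,
    ← NormedSpace.exp_add_of_commute (Commute.refl Z).neg_left, neg_add_cancel,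
    NormedSpace.exp_zero]

section BanachAlgebra

variable {𝔸 : Type*} [NormedRing 𝔸] [NormedAlgebra ℝ 𝔸] {A : 𝔸}

theorem hasDerivAt_rodrigues (hA : A * A * A = -A) (t : ℝ) :
    HasDerivAt (fun t : ℝ => 1 + sin t • A + (1 - cos t) • (A * A))
      (A * (1 + sin t • A + (1 - cos t) • (A * A))) t := by
  refine ((((hasDerivAt_sin t).smul_const A).const_add 1).add
    (((hasDerivAt_cos t).const_sub 1).smul_const (A * A))).congr_deriv ?_
  simp only [mul_add, mul_one, mul_smul_comm, ← mul_assoc, hA]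
  module

variable [CompleteSpace 𝔸]

theorem exp_smul_eq_of_cube_eq_neg (hA : A * A * A = -A) (θ : ℝ) :
    NormedSpace.exp (θ • A) = 1 + sin θ • A + (1 - cos θ) • (A * A) := by
  let : NormedAlgebra ℚ 𝔸 := .restrictScalars ℚ ℝ 𝔸
  set R : ℝ → 𝔸 := fun t => 1 + sin t • A + (1 - cos t) • (A * A)
  have hderiv (t : ℝ) : HasDerivAt (fun t => NormedSpace.exp (t • -A) * R t) 0 t := by
    refine ((hasDerivAt_exp_smul_const (-A) t).mul (hasDerivAt_rodrigues hA t)).congr_deriv ?_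
    rw [mul_assoc, neg_mul, mul_neg, neg_add_cancel]
  have hconst : NormedSpace.exp (θ • -A) * R θ = 1 := by
    simpa [R] using is_const_of_deriv_eq_zero (fun t => (hderiv t).differentiableAt)
      (fun t => (hderiv t).deriv) θ 0
  have hinv : NormedSpace.exp (θ • A) * NormedSpace.exp (θ • -A) = 1 := by
    rw [← NormedSpace.exp_add_of_commute ((Commute.refl A).neg_right.smul_left θ |>.smul_right θ),
      ← smul_add, add_neg_cancel, smul_zero, NormedSpace.exp_zero]
  calc NormedSpace.exp (θ • A)
      = NormedSpace.exp (θ • A) * (NormedSpace.exp (θ • -A) * R θ) := by rw [hconst, mul_one]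
    _ = R θ := by rw [← mul_assoc, hinv, one_mul]

theorem exp_pi_smul_of_cube_eq_neg (hA : A * A * A = -A) :
    NormedSpace.exp (π • A) = 1 + (2 : ℝ) • (A * A) := by
  rw [exp_smul_eq_of_cube_eq_neg hA, sin_pi, cos_pi]
  module

theorem exp_add_pi_smul_mul_exp_smul_mul_exp_pi_smul_mul_exp_smul {Ω Z : 𝔸}
    (hΩ : Ω * Ω * Ω = -Ω) (hΩZ : Ω * Ω * Z + Z * (Ω * Ω) = -Z) (θ ω : ℝ) :
    NormedSpace.exp ((π + θ) • Ω) * NormedSpace.exp (ω • Z) * NormedSpace.exp (π • Ω) *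
      NormedSpace.exp (ω • Z) = NormedSpace.exp (θ • Ω) := by
  let : NormedAlgebra ℚ 𝔸 := .restrictScalars ℚ ℝ 𝔸
  have hP : NormedSpace.exp (π • Ω) * NormedSpace.exp (π • Ω) = 1 := by
    have hΩ4 : Ω * Ω * (Ω * Ω) = -(Ω * Ω) := by rw [← mul_assoc, hΩ, neg_mul]
    rw [exp_pi_smul_of_cube_eq_neg hΩ]
    simp only [add_mul, mul_add, one_mul, mul_one, smul_mul_smul_comm, hΩ4]
    module
  have hPZ : NormedSpace.exp (π • Ω) * (ω • Z) = -(ω • Z) * NormedSpace.exp (π • Ω) := by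
    have hΩZ' : Ω * Ω * Z = -Z - Z * (Ω * Ω) := by rw [← hΩZ]; abel
    rw [exp_pi_smul_of_cube_eq_neg hΩ]
    simp only [add_mul, mul_add, one_mul, mul_one, smul_mul_assoc, mul_smul_comm, neg_mul,
      smul_neg, hΩZ']
    module
  have hrefocus := mul_exp_mul_mul_exp_eq_one hP hPZ
  rw [add_comm, add_smul,
    NormedSpace.exp_add_of_commute ((Commute.refl Ω).smul_left θ |>.smul_right π)]
  simp only [mul_assoc] at hrefocus ⊢
  rw [hrefocus, mul_one]

end BanachAlgebra

theorem dotProduct_self_exp_mulVec {n : Type*} [Fintype n] [DecidableEq n] {A : Matrix n n ℝ}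
    (hA : Aᵀ = -A) (v : n → ℝ) :
    NormedSpace.exp A *ᵥ v ⬝ᵥ NormedSpace.exp A *ᵥ v = v ⬝ᵥ v := by
  have horth : (NormedSpace.exp A)ᵀ * NormedSpace.exp A = 1 := by
    rw [← Matrix.exp_transpose, hA, ← Matrix.exp_add_of_commute _ _ (Commute.refl A).neg_left,
      neg_add_cancel, NormedSpace.exp_zero]
  rw [dotProduct_mulVec, vecMul_mulVec, ← mulVec_transpose, transpose_mul, transpose_transpose,
    horth, one_mulVec]

theorem exists_mem_Ico_lt_mul_cos_add_mul_sin {a b : ℝ} (h : a ≠ 0 ∨ b < 0) :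
    ∃ θ ∈ Ico 0 (2 * π), b < b * cos θ + a * sin θ := by
  set z : ℂ := ⟨b, a⟩
  have hz : z ≠ 0 := fun hz => by
    rcases h with ha | hb
    · exact ha (congrArg Complex.im hz)
    · exact hb.ne (congrArg Complex.re hz)
  have hb : b < ‖z‖ := by
    rcases h with ha | hb
    · exact (le_abs_self b).trans_lt (Complex.abs_re_lt_norm (z := z) |>.mpr ha)
    · exact hb.trans (norm_pos_iff.mpr hz)
  have harg : b * cos (Complex.arg z) + a * sin (Complex.arg z) = ‖z‖ := by
    have hnorm : b * b + a * a = ‖z‖ ^ 2 := by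
      rw [← Complex.normSq_eq_norm_sq, Complex.normSq_apply]
    rw [Complex.cos_arg hz, Complex.sin_arg]
    field_simp
    linear_combination hnorm
  refine ⟨toIcoMod two_pi_pos 0 (Complex.arg z), toIcoMod_mem_Ico' _ _, ?_⟩
  rwa [← self_sub_toIcoDiv_zsmul, zsmul_eq_mul, cos_sub_int_mul_two_pi, sin_sub_int_mul_two_pi,
    harg]

theorem eucNorm_sub_lt_of_dotProduct_self_eq {v w : Fin 3 → ℝ} (e : Fin 3 → ℝ)
    (hvw : v ⬝ᵥ v = w ⬝ᵥ w) (h : w ⬝ᵥ e < v ⬝ᵥ e) : eucNorm (v - e) < eucNorm (w - e) := by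
  have hexpand (u : Fin 3 → ℝ) : (u - e) ⬝ᵥ (u - e) = u ⬝ᵥ u - 2 * u ⬝ᵥ e + e ⬝ᵥ e := by
    rw [sub_dotProduct, dotProduct_sub, dotProduct_sub, dotProduct_comm e u]
    ring
  refine Real.sqrt_lt_sqrt (by simpa using dotProduct_self_star_nonneg (v - e)) ?_
  rw [hexpand, hexpand]
  linarith

theorem ne_zero_or_ne_zero_or_neg_of_ne_e3 {M : Fin 3 → ℝ} (hM : M ⬝ᵥ M = 1)
    (hMe₃ : M ≠ ![0, 0, 1]) : M 0 ≠ 0 ∨ M 1 ≠ 0 ∨ M 2 < 0 := by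
  by_contra! h
  obtain ⟨h0, h1, h2⟩ := h
  have hM2 : M 2 = 1 := by
    simp only [dotProduct, Fin.sum_univ_three, h0, h1] at hM
    nlinarith
  exact hMe₃ (by ext i; fin_cases i <;> simp [h0, h1, hM2])

theorem exists_eucNorm_exp_smul_mulVec_sub_e3_lt {Ω : Matrix (Fin 3) (Fin 3) ℝ} (hΩ : Ωᵀ = -Ω)
    {M : Fin 3 → ℝ} {a : ℝ}
    (hcoord : ∀ θ, (NormedSpace.exp (θ • Ω) *ᵥ M) 2 = M 2 * cos θ + a * sin θ)
    (h : a ≠ 0 ∨ M 2 < 0) :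
    ∃ θ ∈ Ico 0 (2 * π),
      eucNorm (NormedSpace.exp (θ • Ω) *ᵥ M - ![0, 0, 1]) < eucNorm (M - ![0, 0, 1]) := by
  obtain ⟨θ, hθ, hlt⟩ := exists_mem_Ico_lt_mul_cos_add_mul_sin h
  have hskew : (θ • Ω)ᵀ = -(θ • Ω) := by rw [transpose_smul, hΩ, smul_neg]
  refine ⟨θ, hθ, eucNorm_sub_lt_of_dotProduct_self_eq _ (dotProduct_self_exp_mulVec hskew M) ?_⟩
  simpa [dotProduct, Fin.sum_univ_three, hcoord] using hlt

theorem omegaX_cube : OmegaX * OmegaX * OmegaX = -OmegaX := by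
  ext i j; fin_cases i <;> fin_cases j <;> simp [OmegaX]

theorem omegaY_cube : OmegaY * OmegaY * OmegaY = -OmegaY := by
  ext i j; fin_cases i <;> fin_cases j <;> simp [OmegaY]

theorem omegaX_transpose : OmegaXᵀ = -OmegaX := by
  ext i j; fin_cases i <;> fin_cases j <;> simp [OmegaX]

theorem omegaY_transpose : OmegaYᵀ = -OmegaY := by
  ext i j; fin_cases i <;> fin_cases j <;> simp [OmegaY]

theorem omegaX_mul_self_mul_omegaZ_add :
    OmegaX * OmegaX * OmegaZ + OmegaZ * (OmegaX * OmegaX) = -OmegaZ := by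
  ext i j; fin_cases i <;> fin_cases j <;> simp [OmegaX, OmegaZ]

theorem omegaY_mul_self_mul_omegaZ_add :
    OmegaY * OmegaY * OmegaZ + OmegaZ * (OmegaY * OmegaY) = -OmegaZ := by
  ext i j; fin_cases i <;> fin_cases j <;> simp [OmegaY, OmegaZ]

section OperatorNorm

attribute [local instance] Matrix.linftyOpNormedAddCommGroup Matrix.linftyOpNormedRing
  Matrix.linftyOpNormedAlgebra

theorem exp_smul_omegaX (θ : ℝ) :
    NormedSpace.exp (θ • OmegaX) = 1 + sin θ • OmegaX + (1 - cos θ) • (OmegaX * OmegaX) :=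
  exp_smul_eq_of_cube_eq_neg omegaX_cube θ

theorem exp_smul_omegaY (θ : ℝ) :
    NormedSpace.exp (θ • OmegaY) = 1 + sin θ • OmegaY + (1 - cos θ) • (OmegaY * OmegaY) :=
  exp_smul_eq_of_cube_eq_neg omegaY_cube θ

theorem dirac_omegaX (θ ω : ℝ) :
    NormedSpace.exp ((π + θ) • OmegaX) * NormedSpace.exp (ω • OmegaZ) *
      NormedSpace.exp (π • OmegaX) * NormedSpace.exp (ω • OmegaZ) =
    NormedSpace.exp (θ • OmegaX) :=
  exp_add_pi_smul_mul_exp_smul_mul_exp_pi_smul_mul_exp_smul omegaX_cube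
    omegaX_mul_self_mul_omegaZ_add θ ω

theorem dirac_omegaY (θ ω : ℝ) :
    NormedSpace.exp ((π + θ) • OmegaY) * NormedSpace.exp (ω • OmegaZ) *
      NormedSpace.exp (π • OmegaY) * NormedSpace.exp (ω • OmegaZ) =
    NormedSpace.exp (θ • OmegaY) :=
  exp_add_pi_smul_mul_exp_smul_mul_exp_pi_smul_mul_exp_smul omegaY_cube
    omegaY_mul_self_mul_omegaZ_add θ ω

end OperatorNorm

theorem exp_smul_omegaX_mulVec_two (θ : ℝ) (v : Fin 3 → ℝ) :
    (NormedSpace.exp (θ • OmegaX) *ᵥ v) 2 = v 2 * cos θ + v 1 * sin θ := by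
  rw [exp_smul_omegaX]
  simp [OmegaX, mulVec, dotProduct, Fin.sum_univ_three]
  ring

theorem exp_smul_omegaY_mulVec_two (θ : ℝ) (v : Fin 3 → ℝ) :
    (NormedSpace.exp (θ • OmegaY) *ᵥ v) 2 = v 2 * cos θ + -v 0 * sin θ := by
  rw [exp_smul_omegaY]
  simp [OmegaY, mulVec, dotProduct, Fin.sum_univ_three]
  ring

/-- for every `M ∈ S²` with `M ≠ e₃`, there are `Ω ∈ {Ω_x, Ω_y}` and
`θ ∈ [0,2π)` such that `exp((π+θ)Ω) exp(ωΩ_z) exp(πΩ) exp(ωΩ_z) = exp(θΩ)` for every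
`ω ∈ ℝ` (so the corresponding Dirac-controlled evolution of duration 2 sends every member of
the ensemble, independently of `ω`, to `exp(θΩ)M`), and `|exp(θΩ)M - e₃| < |M - e₃|`. -/
theorem dirac_step_towards_e3
    (M : Fin 3 → ℝ) (hM : M ⬝ᵥ M = 1) (hMe₃ : M ≠ ![0, 0, 1]) :
    ∃ Ω ∈ ({OmegaX, OmegaY} : Set (Matrix (Fin 3) (Fin 3) ℝ)),
      ∃ θ ∈ Ico (0:ℝ) (2 * π),
        (∀ ω : ℝ,
          NormedSpace.exp ((π + θ) • Ω) * NormedSpace.exp (ω • OmegaZ) *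
              NormedSpace.exp (π • Ω) * NormedSpace.exp (ω • OmegaZ) =
            NormedSpace.exp (θ • Ω)) ∧
        eucNorm (NormedSpace.exp (θ • Ω) *ᵥ M - ![0, 0, 1]) <
          eucNorm (M - ![0, 0, 1]) := by
  rcases ne_zero_or_ne_zero_or_neg_of_ne_e3 hM hMe₃ with hM0 | hM12
  · obtain ⟨θ, hθ, hlt⟩ := exists_eucNorm_exp_smul_mulVec_sub_e3_lt omegaY_transpose
      (exp_smul_omegaY_mulVec_two · M) (Or.inl (neg_ne_zero.mpr hM0))
    exact ⟨OmegaY, by simp, θ, hθ, dirac_omegaY θ, hlt⟩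
  · obtain ⟨θ, hθ, hlt⟩ := exists_eucNorm_exp_smul_mulVec_sub_e3_lt omegaX_transpose
      (exp_smul_omegaX_mulVec_two · M) hM12
    exact ⟨OmegaX, by simp, θ, hθ, dirac_omegaX θ, hlt⟩
end

section
/- Let -∞ < ω_* < ω^* < +∞ and let M = (x,y,z) ∈ H¹((ω_*,ω^*),S²). Assume that z is not identically zero and that z y' - y z' = 0 and z x' - x z' = 0 almost everywhere on (ω_*,ω^*). Then M is constant on (ω_*,ω^*). (Equivalently, if M is non-constant with z not identically zero, the linear form (P,Q) ↦ ∫_{ω_*}^{ω^*} [ P'(ω)(-z y' + y z') + Q'(ω)(z x' - x z') ] dω on pairs of real polynomials is nonzero.) -/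
/-!
On the sphere `M ⬝ᵥ M' = 0` almost everywhere, and together with the two Wronskian identities
this gives `z' = z (M ⬝ᵥ M') - x (z x' - x z') - y (z y' - y z') = 0`. Hence `z` is a nonzero
constant, after which the Wronskian identities force `x' = y' = 0`, so `M' = 0` almost
everywhere and `M` is constant.
-/

open MeasureTheory Set Matrix Filter

section FundamentalTheorem

variable {E F : Type*} [NormedAddCommGroup E] [NormedSpace ℝ E] [CompleteSpace E]
  [NormedAddCommGroup F] [NormedSpace ℝ F] [CompleteSpace F] {f f' : ℝ → E} {a b : ℝ}

theorem ae_hasDerivAt_of_sub_eq_intervalIntegral (hab : a ≤ b)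
    (hf' : IntegrableOn f' (Ioo a b))
    (hftc : ∀ x ∈ Ioo a b, ∀ y ∈ Ioo a b, f y - f x = ∫ t in x..y, f' t) :
    ∀ᵐ x ∂volume.restrict (Ioo a b), HasDerivAt f (f' x) x := by
  have hint : IntervalIntegrable f' volume a b :=
    (intervalIntegrable_iff_integrableOn_Ioo_of_le hab).2 hf'
  rw [ae_restrict_iff' measurableSet_Ioo]
  filter_upwards [hint.ae_hasDerivAt_integral] with x hx hxI
  have hx_mem : x ∈ uIcc a b := by
    rw [uIcc_of_le hab]
    exact Ioo_subset_Icc_self hxI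
  refine ((hx hx_mem x hx_mem).const_add (f x)).congr_of_eventuallyEq ?_
  filter_upwards [isOpen_Ioo.mem_nhds hxI] with y hy
  rw [← hftc x hxI y hy, add_sub_cancel]

theorem map_eq_of_ae_map_eq_zero (L : E →L[ℝ] F) (hf' : IntegrableOn f' (Ioo a b))
    (hftc : ∀ x ∈ Ioo a b, ∀ y ∈ Ioo a b, f y - f x = ∫ t in x..y, f' t)
    (hL : ∀ᵐ t ∂volume.restrict (Ioo a b), L (f' t) = 0) :
    ∀ x ∈ Ioo a b, ∀ y ∈ Ioo a b, L (f x) = L (f y) := by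
  intro x hx y hy
  have hsub : uIcc x y ⊆ Ioo a b := ordConnected_Ioo.uIcc_subset hx hy
  have hzero : ∫ t in x..y, L (f' t) = 0 := by
    refine intervalIntegral.integral_zero_ae ?_
    filter_upwards [(ae_restrict_iff' measurableSet_Ioo).1 hL] with t ht htI
    exact ht (hsub (uIoc_subset_uIcc htI))
  rw [L.intervalIntegral_comp_comm ((hf'.mono_set hsub).intervalIntegrable), ← hftc x hx y hy,
    map_sub, sub_eq_zero] at hzero
  exact hzero.symm

end FundamentalTheorem

theorem HasDerivAt.dotProduct {𝕜 ι : Type*} [NontriviallyNormedField 𝕜] [Fintype ι]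
    {f g : 𝕜 → ι → 𝕜} {f' g' : ι → 𝕜} {x : 𝕜}
    (hf : HasDerivAt f f' x) (hg : HasDerivAt g g' x) :
    HasDerivAt (fun t => f t ⬝ᵥ g t) (f' ⬝ᵥ g x + f x ⬝ᵥ g') x := by
  have h := HasDerivAt.fun_sum (u := Finset.univ) fun i _ =>
    (hasDerivAt_pi.1 hf i).fun_mul (hasDerivAt_pi.1 hg i)
  rwa [Finset.sum_add_distrib] at h

theorem dotProduct_eq_zero_of_hasDerivAt_of_dotProduct_self_eventually_eq {ι : Type*}
    [Fintype ι] {M : ℝ → ι → ℝ} {M' : ι → ℝ} {x c : ℝ} (hM : HasDerivAt M M' x)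
    (hc : ∀ᶠ y in nhds x, M y ⬝ᵥ M y = c) :
    M x ⬝ᵥ M' = 0 := by
  have h := (hM.dotProduct hM).unique ((hasDerivAt_const x c).congr_of_eventuallyEq hc)
  rw [dotProduct_comm M'] at h
  linarith

section Wronskian

variable {v w : Fin 3 → ℝ}

theorem apply_two_eq_zero_of_wronskian_eq_zero (hv : v ⬝ᵥ v = 1) (hvw : v ⬝ᵥ w = 0)
    (h₁ : v 2 * w 1 - v 1 * w 2 = 0) (h₀ : v 2 * w 0 - v 0 * w 2 = 0) : w 2 = 0 := by
  simp only [dotProduct, Fin.sum_univ_three] at hv hvw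
  linear_combination v 2 * hvw - v 0 * h₀ - v 1 * h₁ - w 2 * hv

theorem eq_zero_of_wronskian_eq_zero (hv : v 2 ≠ 0) (hw : w 2 = 0)
    (h₁ : v 2 * w 1 - v 1 * w 2 = 0) (h₀ : v 2 * w 0 - v 0 * w 2 = 0) : w = 0 := by
  rw [hw, mul_zero, sub_zero] at h₀ h₁
  funext i
  fin_cases i
  · exact (mul_eq_zero.1 h₀).resolve_left hv
  · exact (mul_eq_zero.1 h₁).resolve_left hv
  · exact hw

end Wronskian

/-- if `M = (x,y,z) ∈ H¹((ω_*,ω^*),S²)` has `z` not identically zero and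
satisfies `z y' - y z' = 0` and `z x' - x z' = 0` almost everywhere on `(ω_*,ω^*)`, then `M`
is constant on `(ω_*,ω^*)`. -/
theorem wronskian_vanishing_implies_constant
    (ωs ωe : ℝ) (hω : ωs < ωe) (M M' : ℝ → Fin 3 → ℝ)
    (hH1 : H1On ωs ωe M M')
    (hsphere : ∀ ω ∈ Ioo ωs ωe, M ω ⬝ᵥ M ω = 1)
    (hz : ¬ ∀ ω ∈ Ioo ωs ωe, M ω 2 = 0)
    (hwronskian : ∀ᵐ ω ∂(volume.restrict (Ioo ωs ωe)),
      M ω 2 * M' ω 1 - M ω 1 * M' ω 2 = 0 ∧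
      M ω 2 * M' ω 0 - M ω 0 * M' ω 2 = 0) :
    ∀ ω₁ ∈ Ioo ωs ωe, ∀ ω₂ ∈ Ioo ωs ωe, M ω₁ = M ω₂ := by
  obtain ⟨-, hM', hftc⟩ := hH1
  have hint : IntegrableOn M' (Ioo ωs ωe) := hM'.integrable one_le_two
  have hinside : ∀ᵐ ω ∂volume.restrict (Ioo ωs ωe), ω ∈ Ioo ωs ωe :=
    ae_restrict_mem measurableSet_Ioo
  have horth : ∀ᵐ ω ∂volume.restrict (Ioo ωs ωe), M ω ⬝ᵥ M' ω = 0 := by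
    filter_upwards [ae_hasDerivAt_of_sub_eq_intervalIntegral hω.le hint hftc, hinside]
      with ω hderiv hωI
    exact dotProduct_eq_zero_of_hasDerivAt_of_dotProduct_self_eventually_eq hderiv
      (eventually_of_mem (isOpen_Ioo.mem_nhds hωI) hsphere)
  have hz' : ∀ᵐ ω ∂volume.restrict (Ioo ωs ωe), M' ω 2 = 0 := by
    filter_upwards [hwronskian, horth, hinside] with ω ⟨h₁, h₀⟩ hperp hωI
    exact apply_two_eq_zero_of_wronskian_eq_zero (hsphere ω hωI) hperp h₁ h₀
  have hz_const : ∀ ω ∈ Ioo ωs ωe, ∀ ω' ∈ Ioo ωs ωe, M ω 2 = M ω' 2 :=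
    map_eq_of_ae_map_eq_zero (ContinuousLinearMap.proj 2) hint hftc hz'
  obtain ⟨ω₀, hω₀, hzω₀⟩ : ∃ ω₀ ∈ Ioo ωs ωe, M ω₀ 2 ≠ 0 := by simpa [and_assoc] using hz
  have hM'_zero : ∀ᵐ ω ∂volume.restrict (Ioo ωs ωe), M' ω = 0 := by
    filter_upwards [hwronskian, hz', hinside] with ω ⟨h₁, h₀⟩ hz'ω hωI
    exact eq_zero_of_wronskian_eq_zero (hz_const ω₀ hω₀ ω hωI ▸ hzω₀ :) hz'ω h₁ h₀
  exact map_eq_of_ae_map_eq_zero (ContinuousLinearMap.id ℝ _) hint hftc hM'_zero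
end

section
/- Let N ∈ ℕ, N ≥ 1. The N×N real matrix A with entries A_{k,K} := ∫₀^{π/2} (2k-1) sin((2k-1)ω) ω^K dω, for 1 ≤ k ≤ N and 0 ≤ K ≤ N-1, is invertible. -/
/-!
Integrating by parts twice shows that, whenever `cos (n a) = 0`, the moment
`∫₀^a n sin(nω) ω^K dω` is `P_K(x)` for `x = sin(na)/n` and a polynomial `P_K` of degree exactly
`K`: the boundary terms only involve `x`, and the factor `1/n²` of the recursion equals `x²`
since `sin²(na) = 1`. The matrix is therefore the Vandermonde matrix of the distinct nodes
`x_k = ±1/(2k+1)` times the upper triangular coefficient matrix of the `P_K`.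
-/

open MeasureTheory Set Real Polynomial

theorem Matrix.isUnit_of_eval_of_degree_eq {K : Type*} [Field K] {n : ℕ} {v : Fin n → K}
    (hv : Function.Injective v) (p : Fin n → K[X]) (hp : ∀ j, (p j).degree = (j : ℕ)) :
    IsUnit (Matrix.of fun i j => (p j).eval (v i)) := by
  have hnat : ∀ j, (p j).natDegree = j := fun j => natDegree_eq_of_degree_eq_some (hp j)
  rw [eval_matrixOfPolynomials_eq_vandermonde_mul_matrixOfPolynomials v p (fun j => (hnat j).le),
    Matrix.isUnit_iff_isUnit_det, Matrix.det_mul, isUnit_iff_ne_zero]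
  refine mul_ne_zero (Matrix.det_vandermonde_ne_zero_iff.mpr hv) ?_
  rw [Matrix.det_of_isUpperTriangular (M := Matrix.of fun i j => (p j).coeff i)
    fun i j hji => coeff_eq_zero_of_natDegree_lt (hnat j ▸ hji)]
  refine Finset.prod_ne_zero_iff.mpr fun j _ => ?_
  have hp0 : p j ≠ 0 := fun h => by simpa [h] using hp j
  simpa [Matrix.of_apply, ← hnat j] using hp0

theorem sq_sin_div_of_cos_eq_zero {θ n : ℝ} (h : cos θ = 0) : (sin θ / n) ^ 2 = (n ^ 2)⁻¹ := by
  rw [div_pow, sin_sq, h]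
  ring

-- At `K = 0` the truncated exponent `K - 1` is harmless, as its coefficient `K` vanishes.
theorem hasDerivAt_neg_cos_mul_pow_add_sin_mul_pow (n : ℝ) (hn : n ≠ 0) (K : ℕ) (ω : ℝ) :
    HasDerivAt (fun ω => -cos (n * ω) * ω ^ (K + 1) + (K + 1) / n * sin (n * ω) * ω ^ K)
      (n * sin (n * ω) * ω ^ (K + 1) + (K + 1) * K / n ^ 2 * (n * sin (n * ω) * ω ^ (K - 1)))
      ω := by
  have hlin : HasDerivAt (fun ω : ℝ => n * ω) n ω := by
    simpa using (hasDerivAt_id ω).const_mul n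
  have h := (hlin.cos.neg.mul (hasDerivAt_pow (K + 1) ω)).add
    ((hlin.sin.const_mul (((K : ℝ) + 1) / n)).mul (hasDerivAt_pow K ω))
  refine h.congr_deriv ?_
  simp only [Pi.neg_apply, Nat.add_sub_cancel, Nat.cast_add, Nat.cast_one]
  field_simp
  ring

theorem integral_mul_sin_mul_pow_succ (a : ℝ) {n : ℝ} (hn : n ≠ 0) (K : ℕ) :
    ∫ ω in 0..a, n * sin (n * ω) * ω ^ (K + 1) =
      -cos (n * a) * a ^ (K + 1) + (K + 1) / n * sin (n * a) * a ^ K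
        - (K + 1) * K / n ^ 2 * ∫ ω in 0..a, n * sin (n * ω) * ω ^ (K - 1) := by
  have hint : ∀ m : ℕ, IntervalIntegrable (fun ω => n * sin (n * ω) * ω ^ m) volume 0 a :=
    fun m => (by fun_prop : Continuous fun ω => n * sin (n * ω) * ω ^ m).intervalIntegrable 0 a
  have key := intervalIntegral.integral_eq_sub_of_hasDerivAt
    (fun ω _ => hasDerivAt_neg_cos_mul_pow_add_sin_mul_pow n hn K ω)
    ((hint _).add ((hint _).const_mul _))
  rw [intervalIntegral.integral_add (hint _) ((hint _).const_mul _),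
    intervalIntegral.integral_const_mul] at key
  rw [eq_sub_iff_add_eq, key]
  simp

noncomputable def sinMomentPoly (a : ℝ) : ℕ → ℝ[X]
  | 0 => 1
  | 1 => X
  | K + 2 =>
    C (((K : ℝ) + 2) * a ^ (K + 1)) * X - C (((K : ℝ) + 2) * (K + 1)) * X ^ 2 * sinMomentPoly a K

theorem integral_mul_sin_mul_pow_eq_eval (a : ℝ) {n : ℝ} (h : cos (n * a) = 0) (K : ℕ) :
    ∫ ω in 0..a, n * sin (n * ω) * ω ^ K = (sinMomentPoly a K).eval (sin (n * a) / n) := by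
  have hn : n ≠ 0 := by
    rintro rfl
    simp at h
  induction K using Nat.twoStepInduction with
  | zero => simp [sinMomentPoly, h]
  | one =>
    rw [integral_mul_sin_mul_pow_succ a hn 0]
    simp [sinMomentPoly, h, div_eq_inv_mul]
  | more K ih _ =>
    rw [integral_mul_sin_mul_pow_succ a hn (K + 1), Nat.add_sub_cancel, ih]
    simp only [sinMomentPoly, eval_sub, eval_mul, eval_C, eval_X, eval_pow,
      sq_sin_div_of_cos_eq_zero h, h]
    push_cast
    field_simp
    ring

theorem degree_sinMomentPoly (a : ℝ) (K : ℕ) : (sinMomentPoly a K).degree = K := by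
  induction K using Nat.twoStepInduction with
  | zero => simp [sinMomentPoly]
  | one => simp [sinMomentPoly]
  | more K ih _ =>
    have hlead : (C (((K : ℝ) + 2) * (K + 1)) * X ^ 2 * sinMomentPoly a K).degree = ↑(K + 2) := by
      rw [degree_mul, degree_C_mul_X_pow 2 (by positivity), ih, add_comm]
      rfl
    have hlow : (C (((K : ℝ) + 2) * a ^ (K + 1)) * X).degree < ↑(K + 2) :=
      (degree_C_mul_X_le _).trans_lt (by exact_mod_cast (by omega : 1 < K + 2))
    rw [sinMomentPoly, degree_sub_eq_right_of_degree_lt (hlead ▸ hlow), hlead]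

theorem sin_moment_matrix_invertible_general (N : ℕ) :
    IsUnit (Matrix.of fun k K : Fin N =>
      ∫ ω in Ioo 0 (π / 2),
        (2 * (k : ℕ) + 1 : ℝ) * Real.sin ((2 * (k : ℕ) + 1 : ℝ) * ω) * ω ^ (K : ℕ)) := by
  set n : Fin N → ℝ := fun k => 2 * (k : ℕ) + 1 with hn_def
  have hcos : ∀ k, cos (n k * (π / 2)) = 0 := fun k =>
    cos_eq_zero_iff.mpr ⟨(k : ℕ), by push_cast [hn_def]; ring⟩
  have hA : (Matrix.of fun k K : Fin N => ∫ ω in Ioo 0 (π / 2), n k * sin (n k * ω) * ω ^ (K : ℕ)) =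
      Matrix.of fun k (K : Fin N) =>
        (sinMomentPoly (π / 2) K).eval (sin (n k * (π / 2)) / n k) := by
    ext k K
    rw [Matrix.of_apply, Matrix.of_apply, ← integral_mul_sin_mul_pow_eq_eval _ (hcos k),
      intervalIntegral.integral_of_le (by positivity), integral_Ioc_eq_integral_Ioo]
  rw [hA]
  refine Matrix.isUnit_of_eval_of_degree_eq (fun i j hij => ?_) _ fun K => degree_sinMomentPoly _ K
  have hsq := congrArg (· ^ 2) hij
  simp only [sq_sin_div_of_cos_eq_zero (hcos _), inv_inj] at hsq
  have hnij : n i = n j := (pow_left_inj₀ (by positivity) (by positivity) two_ne_zero).mp hsq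
  exact Fin.ext (by simpa [hn_def] using hnij)

/-- for `N ≥ 1`, the `N×N` matrix with entries
`A_{k,K} = ∫₀^{π/2} (2k-1) sin((2k-1)ω) ω^K dω` (rows `k ∈ {1,…,N}`, columns
`K ∈ {0,…,N-1}`), is invertible. -/
theorem sin_moment_matrix_invertible (N : ℕ) (hN : 1 ≤ N) :
    IsUnit (Matrix.of fun k K : Fin N =>
      ∫ ω in Ioo 0 (π / 2),
        (2 * (k : ℕ) + 1 : ℝ) * Real.sin ((2 * (k : ℕ) + 1 : ℝ) * ω) * ω ^ (K : ℕ)) :=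
  sin_moment_matrix_invertible_general N
end
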